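/- Let h₀ = k_ℓ + h̃ where k_ℓ is the fundamental singular strain at z_ℓ with Burgers modulus b_ℓ and h̃ is continuous near z_ℓ. Then for the Eshelby stress C = W(h₀)I − h₀ ⊗ (Lh₀), the limit lim_{R→0} ∫_{∂E_R(z_ℓ)} C n ds = b_ℓ J L h̃(z_ℓ), where J = ((0,1),(−1,0)), n is the outward unit normal to E_R(z_ℓ), and W(h) = (1/2) h · Lh. -/

import Mathlib

/-- The fundamental singular strain of a screw dislocation at `z` with Burgers
modulus `b`, for Lamé modulus `lam`. -/
noncomputable def kfun (lam b : ℝ) (z x : ℝ × ℝ) : ℝ × ℝ :=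
  (b * lam / (2 * Real.pi * (lam ^ 2 * (x.1 - z.1) ^ 2 + (x.2 - z.2) ^ 2)) * (-(x.2 - z.2)),
   b * lam / (2 * Real.pi * (lam ^ 2 * (x.1 - z.1) ^ 2 + (x.2 - z.2) ^ 2)) * (x.1 - z.1))

/-- The open ellipse `E_r(z) = {x : (x₁−z₁)² + ((x₂−z₂)/λ)² < r²}`. -/
def ellipse (lam : ℝ) (z : ℝ × ℝ) (r : ℝ) : Set (ℝ × ℝ) :=
  {x : ℝ × ℝ | (x.1 - z.1) ^ 2 + ((x.2 - z.2) / lam) ^ 2 < r ^ 2}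

/-- `L p` for `L = diag(μ, μλ²)`. -/
def mulL (mu lam : ℝ) (p : ℝ × ℝ) : ℝ × ℝ := (mu * p.1, mu * lam ^ 2 * p.2)

/-- The dot product on `ℝ × ℝ`. -/
def dot (p q : ℝ × ℝ) : ℝ := p.1 * q.1 + p.2 * q.2

/-- The energy density `W(h) = (1/2) h·Lh`. -/
noncomputable def Wen (mu lam : ℝ) (p : ℝ × ℝ) : ℝ := (1 / 2 : ℝ) * dot p (mulL mu lam p)

/-! On `∂E_R(z)` the singular strain is `k = q (−sin τ, cos τ / λ)` with `q = b / (2πR)`. There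
`L k ⋅ n = 0` and `k ⋅ L k = μ q²`, so `C(k + h̃) n` splits into `W(k) n`, whose integral over a
full turn vanishes, the cross term `q J L h̃`, and `C(h̃) n`. After multiplying by the length
factor `R` the cross term becomes `(b / 2π) J L h̃` and the last term carries a factor `R`; both
depend continuously on `(h̃, R, τ)`, so the integral tends to `∫₀^{2π} (b / 2π) J L h̃(z) dτ`. -/

open Real Filter Set Topology intervalIntegral
open MeasureTheory (volume)

/-- The point of `∂E_R(z)` with eccentric anomaly `τ`; there `n ds = R (λ cos τ, sin τ) dτ`. -/
noncomputable def ellipsePoint (lam : ℝ) (z : ℝ × ℝ) (R τ : ℝ) : ℝ × ℝ :=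
  (z.1 + R * cos τ, z.2 + lam * R * sin τ)

/-- `C n` for the Eshelby stress `C = W(h) I − h ⊗ L h`. -/
noncomputable def eshelbyFlux (mu lam : ℝ) (h n : ℝ × ℝ) : ℝ × ℝ :=
  (Wen mu lam h * n.1 - h.1 * dot (mulL mu lam h) n,
   Wen mu lam h * n.2 - h.2 * dot (mulL mu lam h) n)

def mulJ (p : ℝ × ℝ) : ℝ × ℝ := (p.2, -p.1)

@[simp]
theorem ellipsePoint_zero (lam : ℝ) (z : ℝ × ℝ) (τ : ℝ) : ellipsePoint lam z 0 τ = z := by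
  simp [ellipsePoint]

@[fun_prop]
theorem Continuous.ellipsePoint {X : Type*} [TopologicalSpace X] {R τ : X → ℝ}
    (hR : Continuous R) (hτ : Continuous τ) (lam : ℝ) (z : ℝ × ℝ) :
    Continuous fun x => _root_.ellipsePoint lam z (R x) (τ x) := by
  unfold _root_.ellipsePoint; fun_prop

theorem ellipsePoint_mem_ellipse {lam R r : ℝ} (hlam : lam ≠ 0) (hR : |R| < r) (z : ℝ × ℝ)
    (τ : ℝ) : ellipsePoint lam z R τ ∈ ellipse lam z r := by
  have hRr : R ^ 2 < r ^ 2 := sq_lt_sq.mpr (hR.trans_le (le_abs_self r))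
  have hτ : (R * cos τ) ^ 2 + (R * sin τ) ^ 2 = R ^ 2 := by
    linear_combination R ^ 2 * cos_sq_add_sin_sq τ
  simpa only [ellipse, ellipsePoint, mem_ofPred_eq, add_sub_cancel_left, mul_assoc,
    mul_div_cancel_left₀ _ hlam, hτ] using hRr

theorem kfun_ellipsePoint {lam R : ℝ} (hlam : lam ≠ 0) (hR : R ≠ 0) (b : ℝ) (z : ℝ × ℝ)
    (τ : ℝ) :
    kfun lam b z (ellipsePoint lam z R τ) = (b / (2 * π * R)) • (-sin τ, cos τ / lam) := by
  have hden : lam ^ 2 * (z.1 + R * cos τ - z.1) ^ 2 + (z.2 + lam * R * sin τ - z.2) ^ 2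
      = lam ^ 2 * R ^ 2 := by
    linear_combination lam ^ 2 * R ^ 2 * cos_sq_add_sin_sq τ
  simp only [kfun, ellipsePoint, hden, Prod.smul_mk, smul_eq_mul]
  ext <;> field_simp <;> ring

theorem eshelbyFlux_singular_add {lam : ℝ} (hlam : lam ≠ 0) (mu q τ : ℝ) (p : ℝ × ℝ) :
    eshelbyFlux mu lam (q • (-sin τ, cos τ / lam) + p) (lam * cos τ, sin τ)
      = (mu * q ^ 2 / 2) • (lam * cos τ, sin τ) + q • mulJ (mulL mu lam p)
        + eshelbyFlux mu lam p (lam * cos τ, sin τ) := by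
  obtain ⟨p₁, p₂⟩ := p
  simp only [eshelbyFlux, Wen, dot, mulL, mulJ, Prod.smul_mk, Prod.mk_add_mk, smul_eq_mul]
  ext <;> field_simp
  · linear_combination (mu * cos τ * q ^ 2 + 2 * mu * q * lam * p₂) * sin_sq_add_cos_sq τ
  · linear_combination (mu * sin τ * q ^ 2 - 2 * mu * q * p₁) * sin_sq_add_cos_sq τ

theorem clm_eshelbyFlux_kfun_add_mul (ℓ : ℝ × ℝ →L[ℝ] ℝ) {lam R : ℝ} (hlam : lam ≠ 0)
    (hR : R ≠ 0) (mu b : ℝ) (z p : ℝ × ℝ) (τ : ℝ) :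
    ℓ (eshelbyFlux mu lam (kfun lam b z (ellipsePoint lam z R τ) + p) (lam * cos τ, sin τ)) * R
      = R * (mu * (b / (2 * π * R)) ^ 2 / 2) * ℓ (lam * cos τ, sin τ)
        + ℓ ((b / (2 * π)) • mulJ (mulL mu lam p)
          + R • eshelbyFlux mu lam p (lam * cos τ, sin τ)) := by
  have hqR : R * (b / (2 * π * R)) = b / (2 * π) := by field_simp
  rw [kfun_ellipsePoint hlam hR, eshelbyFlux_singular_add hlam, mul_comm, ← smul_eq_mul,
    ← map_smul, smul_add, smul_add, smul_smul, smul_smul, hqR, map_add, map_add, map_smul,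
    smul_eq_mul, add_assoc, ← map_add]

theorem integral_clm_cos_sin_eq_zero (ℓ : ℝ × ℝ →L[ℝ] ℝ) (lam : ℝ) :
    ∫ τ in 0..2 * π, ℓ (lam * cos τ, sin τ) = 0 := by
  have hderiv : ∀ τ, HasDerivAt (fun τ => ℓ (lam * sin τ, -cos τ)) (ℓ (lam * cos τ, sin τ)) τ :=
    fun τ => ℓ.hasFDerivAt.comp_hasDerivAt τ
      (((hasDerivAt_sin τ).const_mul lam).prodMk (by simpa using (hasDerivAt_cos τ).fun_neg))
  rw [integral_eq_sub_of_hasDerivAt (fun τ _ => hderiv τ)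
    ((by fun_prop : Continuous fun τ => ℓ (lam * cos τ, sin τ)).intervalIntegrable _ _)]
  simp

theorem tendsto_integral_comp_ellipsePoint {F E : Type*} [TopologicalSpace F]
    [NormedAddCommGroup E] [NormedSpace ℝ E] {lam R₀ : ℝ} (hlam : lam ≠ 0) (hR₀ : 0 < R₀)
    {z : ℝ × ℝ} {f : ℝ × ℝ → F} (hf : ContinuousOn f (ellipse lam z R₀)) {Φ : F → ℝ → ℝ → E}
    (hΦ : Continuous fun w : F × ℝ × ℝ => Φ w.1 w.2.1 w.2.2) (a b : ℝ) :
    Tendsto (fun R => ∫ τ in a..b, Φ (f (ellipsePoint lam z R τ)) R τ) (𝓝[≥] 0)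
      (𝓝 (∫ τ in a..b, Φ (f z) 0 τ)) := by
  have hr : (0 : ℝ) < R₀ / 2 := by positivity
  -- clamping the radius to `[0, R₀/2]` makes the integrand continuous on the whole plane
  set ρ : ℝ → ℝ := fun R => projIcc 0 (R₀ / 2) hr.le R
  have hρ : Continuous ρ := continuous_subtype_val.comp continuous_projIcc
  have hmem : ∀ p : ℝ × ℝ, ellipsePoint lam z (ρ p.1) p.2 ∈ ellipse lam z R₀ := fun p =>
    have hρp := (projIcc 0 (R₀ / 2) hr.le p.1).2
    ellipsePoint_mem_ellipse hlam (by rw [abs_of_nonneg hρp.1]; linarith [hρp.2]) z p.2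
  have hG : Continuous (Function.uncurry fun R τ => Φ (f (ellipsePoint lam z (ρ R) τ)) (ρ R) τ) :=
    hΦ.comp ((hf.comp_continuous (by fun_prop) hmem).prodMk
      ((hρ.comp continuous_fst).prodMk continuous_snd))
  have hlim := ((continuous_parametric_intervalIntegral_of_continuous' (μ := volume) hG a b)
    |>.tendsto 0).mono_left (nhdsWithin_le_nhds (s := Ici 0))
  simp only [ρ, projIcc_left, ellipsePoint_zero] at hlim
  refine hlim.congr' ?_
  filter_upwards [Icc_mem_nhdsGE hr] with R hR
  simp only [projIcc_of_mem _ hR]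

theorem tendsto_integral_clm_eshelbyFlux (ℓ : ℝ × ℝ →L[ℝ] ℝ) {lam R₀ : ℝ} (hlam : lam ≠ 0)
    (hR₀ : 0 < R₀) (mu b : ℝ) {z : ℝ × ℝ} {htil : ℝ × ℝ → ℝ × ℝ}
    (hcont : ContinuousOn htil (ellipse lam z R₀)) :
    Tendsto (fun R => ∫ τ in 0..2 * π,
        ℓ (eshelbyFlux mu lam
          (kfun lam b z (ellipsePoint lam z R τ) + htil (ellipsePoint lam z R τ))
          (lam * cos τ, sin τ)) * R)
      (𝓝[Ioo 0 R₀] 0) (𝓝 (ℓ (b • mulJ (mulL mu lam (htil z))))) := by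
  let Φ : ℝ × ℝ → ℝ → ℝ → ℝ := fun p R τ =>
    ℓ ((b / (2 * π)) • mulJ (mulL mu lam p) + R • eshelbyFlux mu lam p (lam * cos τ, sin τ))
  have hΦ : Continuous fun w : (ℝ × ℝ) × ℝ × ℝ => Φ w.1 w.2.1 w.2.2 := by
    simp only [Φ]
    unfold eshelbyFlux mulJ mulL Wen dot
    fun_prop
  have hval : ∫ τ in 0..2 * π, Φ (htil z) 0 τ = ℓ (b • mulJ (mulL mu lam (htil z))) := by
    simp only [Φ, zero_smul, add_zero, integral_const, sub_zero, ← map_smul, smul_smul]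
    congr 2
    field_simp
  have hlim := (tendsto_integral_comp_ellipsePoint hlam hR₀ hcont hΦ 0 (2 * π)).mono_left
    (nhdsWithin_mono _ fun _ (hR : _ ∈ Ioo 0 R₀) => hR.1.le)
  rw [hval] at hlim
  refine hlim.congr' (eventually_nhdsWithin_of_forall fun R ⟨hR, hRR₀⟩ => ?_)
  have hn : IntervalIntegrable (fun τ => R * (mu * (b / (2 * π * R)) ^ 2 / 2) *
      ℓ (lam * cos τ, sin τ)) volume 0 (2 * π) :=
    (by fun_prop : Continuous _).intervalIntegrable _ _
  have hΦR : Continuous fun τ => Φ (htil (ellipsePoint lam z R τ)) R τ :=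
    hΦ.comp ((hcont.comp_continuous (by fun_prop) fun τ =>
      ellipsePoint_mem_ellipse hlam (by rw [abs_of_pos hR]; exact hRR₀) z τ).prodMk
        (continuous_const.prodMk continuous_id))
  simp_rw [clm_eshelbyFlux_kfun_add_mul ℓ hlam hR.ne']
  rw [integral_add hn (hΦR.intervalIntegrable _ _), integral_const_mul,
    integral_clm_cos_sin_eq_zero, mul_zero, zero_add]

theorem tendsto_eshelby_boundary_integral_general (lam mu b R₀ : ℝ)
    (hlam : 0 < lam) (hR₀ : 0 < R₀) (zl : ℝ × ℝ)
    (htil : ℝ × ℝ → ℝ × ℝ) (hcont : ContinuousOn htil (closure (ellipse lam zl R₀)))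
    (h₀ : ℝ × ℝ → ℝ × ℝ) (hh₀ : ∀ x, h₀ x = kfun lam b zl x + htil x) :
    Filter.Tendsto (fun R : ℝ =>
      ((∫ τ in (0:ℝ)..(2 * Real.pi),
          (Wen mu lam (h₀ (zl.1 + R * Real.cos τ, zl.2 + lam * R * Real.sin τ))
              * (lam * Real.cos τ)
            - (h₀ (zl.1 + R * Real.cos τ, zl.2 + lam * R * Real.sin τ)).1 *
              dot (mulL mu lam (h₀ (zl.1 + R * Real.cos τ, zl.2 + lam * R * Real.sin τ)))
                (lam * Real.cos τ, Real.sin τ)) * R),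
       (∫ τ in (0:ℝ)..(2 * Real.pi),
          (Wen mu lam (h₀ (zl.1 + R * Real.cos τ, zl.2 + lam * R * Real.sin τ))
              * Real.sin τ
            - (h₀ (zl.1 + R * Real.cos τ, zl.2 + lam * R * Real.sin τ)).2 *
              dot (mulL mu lam (h₀ (zl.1 + R * Real.cos τ, zl.2 + lam * R * Real.sin τ)))
                (lam * Real.cos τ, Real.sin τ)) * R)))
      (nhdsWithin 0 (Set.Ioo 0 R₀))
      (nhds (b * (mu * lam ^ 2 * (htil zl).2), b * (-(mu * (htil zl).1)))) := by
  obtain rfl : h₀ = fun x => kfun lam b zl x + htil x := funext hh₀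
  have hcont' := hcont.mono subset_closure
  exact (tendsto_integral_clm_eshelbyFlux (.fst ℝ ℝ ℝ) hlam.ne' hR₀ mu b hcont').prodMk_nhds
    (tendsto_integral_clm_eshelbyFlux (.snd ℝ ℝ ℝ) hlam.ne' hR₀ mu b hcont')

/-- Let `h₀ = k_ℓ + h̃` with `h̃` continuous near `z_ℓ`.  For the Eshelby stress
`C = W(h₀)I − h₀ ⊗ (Lh₀)`, one has
`lim_{R→0} ∫_{∂E_R(z_ℓ)} C n ds = b_ℓ J L h̃(z_ℓ)`, `J = ((0,1),(−1,0))`, the boundary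
being parametrized by eccentric anomaly, with `n ds = R (λ cos τ, sin τ) dτ`. -/
theorem tendsto_eshelby_boundary_integral (lam mu b R₀ : ℝ)
    (hlam : 0 < lam) (hmu : 0 < mu) (hR₀ : 0 < R₀) (zl : ℝ × ℝ)
    (htil : ℝ × ℝ → ℝ × ℝ) (hcont : ContinuousOn htil (closure (ellipse lam zl R₀)))
    (h₀ : ℝ × ℝ → ℝ × ℝ) (hh₀ : ∀ x, h₀ x = kfun lam b zl x + htil x) :
    Filter.Tendsto (fun R : ℝ =>
      ((∫ τ in (0:ℝ)..(2 * Real.pi),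
          (Wen mu lam (h₀ (zl.1 + R * Real.cos τ, zl.2 + lam * R * Real.sin τ))
              * (lam * Real.cos τ)
            - (h₀ (zl.1 + R * Real.cos τ, zl.2 + lam * R * Real.sin τ)).1 *
              dot (mulL mu lam (h₀ (zl.1 + R * Real.cos τ, zl.2 + lam * R * Real.sin τ)))
                (lam * Real.cos τ, Real.sin τ)) * R),
       (∫ τ in (0:ℝ)..(2 * Real.pi),
          (Wen mu lam (h₀ (zl.1 + R * Real.cos τ, zl.2 + lam * R * Real.sin τ))
              * Real.sin τ
            - (h₀ (zl.1 + R * Real.cos τ, zl.2 + lam * R * Real.sin τ)).2 *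
              dot (mulL mu lam (h₀ (zl.1 + R * Real.cos τ, zl.2 + lam * R * Real.sin τ)))
                (lam * Real.cos τ, Real.sin τ)) * R)))
      (nhdsWithin 0 (Set.Ioo 0 R₀))
      (nhds (b * (mu * lam ^ 2 * (htil zl).2), b * (-(mu * (htil zl).1)))) :=
  tendsto_eshelby_boundary_integral_general lam mu b R₀ hlam hR₀ zl htil hcont h₀ hh₀
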